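/- There exists a constant C > 0 such that for all positive integers m and all irrational θ, B(θ) ≤ B(mθ) + C·log m, where B is the Brjuno sum B(θ) = Σ_{n≥0} (log q_{n+1})/q_n and q_n are the convergent denominators of θ (with the convention B(θ) = +∞ allowed). -/

import Mathlib

/-- The Gauss-map iterates of `α`: `gaussIter α 0 = {α}`, `gaussIter α (n+1) = {1/gaussIter α n}`. -/
noncomputable def gaussIter (α : ℝ) : ℕ → ℝ
  | 0 => Int.fract α
  | n + 1 => Int.fract (1 / gaussIter α n)

/-- Partial quotients of the continued fraction of `α`. -/
noncomputable def cfA (α : ℝ) : ℕ → ℤ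
  | 0 => ⌊α⌋
  | n + 1 => ⌊1 / gaussIter α n⌋

/-- Numerators of the convergents of `α`. -/
noncomputable def cfP (α : ℝ) : ℕ → ℤ
  | 0 => cfA α 0
  | 1 => cfA α 1 * cfA α 0 + 1
  | n + 2 => cfA α (n + 2) * cfP α (n + 1) + cfP α n

/-- Denominators of the convergents of `α`. -/
noncomputable def cfQ (α : ℝ) : ℕ → ℤ
  | 0 => 1
  | 1 => cfA α 1
  | n + 2 => cfA α (n + 2) * cfQ α (n + 1) + cfQ α n

open scoped ENNReal

/-- The Brjuno sum `B(θ) = ∑ (log q_{n+1})/q_n ∈ (0, ∞]`, where `q_n` are the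
convergent denominators of `θ`. -/
noncomputable def brjunoB (θ : ℝ) : ℝ≥0∞ :=
  ∑' n : ℕ, ENNReal.ofReal (Real.log (cfQ θ (n + 1) : ℝ) / (cfQ θ n : ℝ))

/-!
Write `ξ = mθ`. If `q_{n+1} ≤ 2m q_n`, the `n`-th term of `B(θ)` is at most
`(log 2m + log q_n) / q_n`. Otherwise `|θ - p_n/q_n| < 1/(2m q_n²)`, so by Legendre's theorem
`m p_n / q_n` is a convergent `P_j / Q_j` of `ξ`, with `Q_j ≤ q_n ≤ m Q_j` and `q_{n+1} ≤ 2m Q_{j+1}`;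
then the `n`-th term of `B(θ)` is at most the `j`-th term of `B(ξ)` plus `log 2m / q_n`, and distinct
such `n` give distinct `j`. Since `q_{n+2} ≥ 2 q_n`, both `∑ 1/q_n` and `∑ log q_n / q_n` are
bounded by absolute constants.
-/

lemma Rat.den_natCast_mul_dvd (m : ℕ) (x : ℚ) : ((m : ℚ) * x).den ∣ x.den := by
  simpa using Rat.mul_den_dvd (m : ℚ) x

lemma Rat.den_dvd_mul_den_natCast_mul {m : ℕ} (hm : 0 < m) (x : ℚ) :
    x.den ∣ m * ((m : ℚ) * x).den := by
  have := Rat.mul_den_dvd (m : ℚ)⁻¹ ((m : ℚ) * x)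
  rwa [inv_mul_cancel_left₀ (by positivity), Rat.inv_natCast_den_of_pos hm] at this

lemma ENNReal.tsum_le_of_add_le_mul {f : ℕ → ℝ≥0∞} {r : ℝ≥0∞} {p : ℕ} [NeZero p]
    (h : ∀ n, f (n + p) ≤ r * f n) : ∑' n, f n ≤ (1 - r)⁻¹ * ∑ i : Fin p, f i := by
  have hpow : ∀ k i, f (k * p + i) ≤ r ^ k * f i := by
    intro k i
    induction k with
    | zero => simp
    | succ k ih =>
      calc f ((k + 1) * p + i) = f (k * p + i + p) := by ring_nf
        _ ≤ r * f (k * p + i) := h _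
        _ ≤ r * (r ^ k * f i) := by gcongr
        _ = r ^ (k + 1) * f i := by ring
  calc ∑' n, f n = ∑' x : ℕ × Fin p, f (x.1 * p + x.2) :=
        ((Nat.divModEquiv p).symm.tsum_eq f).symm
    _ = ∑' k, ∑ i : Fin p, f (k * p + i) := by rw [ENNReal.tsum_prod']; simp only [tsum_fintype]
    _ ≤ ∑' k, ∑ i : Fin p, r ^ k * f i := by gcongr with k i; exact hpow k i
    _ = (1 - r)⁻¹ * ∑ i : Fin p, f i := by
        simp only [← Finset.mul_sum]; rw [ENNReal.tsum_mul_right, ENNReal.tsum_geometric]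

lemma Real.log_div_self_le_two_mul_inv_sqrt {x : ℝ} (hx : 0 < x) :
    Real.log x / x ≤ 2 * (√x)⁻¹ := by
  have hs : 0 < √x := Real.sqrt_pos.2 hx
  have hlog : Real.log x ≤ 2 * √x := by
    have := Real.log_le_sub_one_of_pos hs
    rw [Real.log_sqrt hx.le] at this
    linarith
  calc Real.log x / x ≤ 2 * √x / x := by gcongr
    _ = 2 * (√x)⁻¹ := by
      nth_rewrite 2 [← Real.mul_self_sqrt hx.le]; field_simp

lemma tsum_ofReal_inv_le {g : ℕ → ℝ} {p : ℕ} [NeZero p] (hg : ∀ n, 1 ≤ g n)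
    (hgp : ∀ n, 2 * g n ≤ g (n + p)) : ∑' n, ENNReal.ofReal (g n)⁻¹ ≤ 2 * p := by
  have hstep n : ENNReal.ofReal (g (n + p))⁻¹ ≤ 2⁻¹ * ENNReal.ofReal (g n)⁻¹ := by
    rw [← ENNReal.ofReal_ofNat 2, ← ENNReal.ofReal_inv_of_pos two_pos,
      ← ENNReal.ofReal_mul (by norm_num), ← mul_inv]
    exact ENNReal.ofReal_le_ofReal (inv_anti₀ (by linarith [hg n]) (hgp n))
  calc _ ≤ (1 - 2⁻¹)⁻¹ * ∑ i : Fin p, ENNReal.ofReal (g i)⁻¹ :=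
        ENNReal.tsum_le_of_add_le_mul hstep
    _ ≤ 2 * ∑ _i : Fin p, 1 := by
      rw [ENNReal.one_sub_inv_two, inv_inv]
      gcongr with i
      exact ENNReal.ofReal_le_one.2 (inv_le_one_of_one_le₀ (hg i))
    _ = 2 * p := by simp

section DoublingSequence

variable {q : ℕ → ℝ}

lemma tsum_ofReal_inv_le_four (hq : ∀ n, 1 ≤ q n) (hq2 : ∀ n, 2 * q n ≤ q (n + 2)) :
    ∑' n, ENNReal.ofReal (q n)⁻¹ ≤ 4 :=
  (tsum_ofReal_inv_le (p := 2) hq hq2).trans_eq (by norm_num)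

lemma tsum_ofReal_log_div_le_sixteen (hq : ∀ n, 1 ≤ q n) (hq2 : ∀ n, 2 * q n ≤ q (n + 2)) :
    ∑' n, ENNReal.ofReal (Real.log (q n) / q n) ≤ 16 := by
  have hq4 n : 2 * √(q n) ≤ √(q (n + 4)) := by
    rw [show (2 : ℝ) = √4 by rw [show (4 : ℝ) = 2 ^ 2 by norm_num, Real.sqrt_sq two_pos.le],
      ← Real.sqrt_mul (by norm_num)]
    exact Real.sqrt_le_sqrt (by linarith [hq2 n, hq2 (n + 2)])
  have hsqrt : ∑' n, ENNReal.ofReal (√(q n))⁻¹ ≤ 2 * 4 := by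
    exact_mod_cast tsum_ofReal_inv_le (p := 4) (fun n ↦ Real.one_le_sqrt.2 (hq n)) hq4
  calc _ ≤ ∑' n, 2 * ENNReal.ofReal (√(q n))⁻¹ := by
        gcongr with n
        rw [← ENNReal.ofReal_ofNat 2, ← ENNReal.ofReal_mul zero_le_two]
        exact ENNReal.ofReal_le_ofReal (Real.log_div_self_le_two_mul_inv_sqrt (by linarith [hq n]))
    _ ≤ 2 * (2 * 4) := by rw [ENNReal.tsum_mul_left]; gcongr
    _ = 16 := by norm_num

end DoublingSequence

lemma ENNReal.tsum_le_tsum_add_tsum_of_injOn {α β : Type*} {t w : α → ℝ≥0∞} {T : β → ℝ≥0∞}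
    {S : Set α} {J : α → β} (hJ : S.InjOn J) (hS : ∀ a ∈ S, t a ≤ T (J a) + w a)
    (hSc : ∀ a ∉ S, t a ≤ w a) : ∑' a, t a ≤ ∑' b, T b + ∑' a, w a := by
  calc ∑' a, t a ≤ ∑' a, (S.indicator (T ∘ J) a + w a) := by
        refine ENNReal.tsum_le_tsum fun a ↦ ?_
        by_cases ha : a ∈ S
        · simpa [ha] using hS a ha
        · simpa [ha] using hSc a ha
    _ = ∑' a : S, T (J a) + ∑' a, w a := by rw [ENNReal.tsum_add, ← tsum_subtype S (T ∘ J)]; rfl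
    _ ≤ ∑' b, T b + ∑' a, w a := by
        gcongr; exact ENNReal.tsum_comp_le_tsum_of_injective hJ.injective T

lemma Real.log_div_le_log_div_add_log_div {x y x' y' c : ℝ} (hy : 0 < y) (hyx : y ≤ x)
    (hx' : 0 < x') (hy' : 1 ≤ y') (hc : 0 < c) (h : x' ≤ c * y') :
    Real.log x' / x ≤ Real.log y' / y + Real.log c / x := by
  have hlog : Real.log x' ≤ Real.log c + Real.log y' := by
    rw [← Real.log_mul hc.ne' (by linarith)]; exact Real.log_le_log hx' h
  have hy'log := Real.log_nonneg hy'
  calc Real.log x' / x ≤ Real.log y' / x + Real.log c / x := by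
        rw [← add_div]; exact div_le_div_of_nonneg_right (by linarith) (by linarith)
    _ ≤ Real.log y' / y + Real.log c / x := by gcongr

section ContinuedFraction

variable {θ ξ : ℝ}

lemma gaussIter_succ (θ : ℝ) (n : ℕ) :
    gaussIter θ (n + 1) = (gaussIter θ n)⁻¹ - cfA θ (n + 1) := by
  rw [gaussIter, Int.fract, one_div, cfA, one_div]

lemma irrational_gaussIter (hθ : Irrational θ) : ∀ n, Irrational (gaussIter θ n)
  | 0 => hθ.sub_intCast ⌊θ⌋
  | n + 1 => by
    rw [gaussIter_succ]; exact (irrational_gaussIter hθ n).inv.sub_intCast (cfA θ (n + 1))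

lemma gaussIter_pos (hθ : Irrational θ) (n : ℕ) : 0 < gaussIter θ n := by
  refine lt_of_le_of_ne ?_ (irrational_gaussIter hθ n).ne_zero.symm
  cases n <;> exact Int.fract_nonneg _

lemma gaussIter_lt_one (θ : ℝ) (n : ℕ) : gaussIter θ n < 1 := by
  cases n <;> exact Int.fract_lt_one _

lemma one_le_cfA_succ (hθ : Irrational θ) (n : ℕ) : 1 ≤ cfA θ (n + 1) := by
  rw [cfA, Int.le_floor, Int.cast_one, one_div]
  exact (one_lt_inv₀ (gaussIter_pos hθ n)).2 (gaussIter_lt_one θ n) |>.le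

lemma one_le_cfQ (hθ : Irrational θ) : ∀ n, 1 ≤ cfQ θ n
  | 0 => le_rfl
  | 1 => one_le_cfA_succ hθ 0
  | n + 2 => by
    have := one_le_cfA_succ hθ (n + 1)
    have := one_le_cfQ hθ n
    have := one_le_cfQ hθ (n + 1)
    rw [cfQ]; nlinarith

lemma cfQ_le_cfQ_succ (hθ : Irrational θ) : ∀ n, cfQ θ n ≤ cfQ θ (n + 1)
  | 0 => one_le_cfA_succ hθ 0
  | n + 1 => by
    have := one_le_cfA_succ hθ (n + 1)
    have := one_le_cfQ hθ n
    have := one_le_cfQ hθ (n + 1)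
    rw [cfQ]; nlinarith

lemma cfQ_monotone (hθ : Irrational θ) : Monotone (cfQ θ) :=
  monotone_nat_of_le_succ (cfQ_le_cfQ_succ hθ)

lemma two_mul_cfQ_le_cfQ_add_two (hθ : Irrational θ) (n : ℕ) :
    2 * cfQ θ n ≤ cfQ θ (n + 2) := by
  have := one_le_cfA_succ hθ (n + 1)
  have := one_le_cfQ hθ n
  have := cfQ_le_cfQ_succ hθ n
  rw [cfQ]; nlinarith

lemma cfP_succ_mul_cfQ_sub_cfP_mul_cfQ_succ (θ : ℝ) :
    ∀ n, cfP θ (n + 1) * cfQ θ n - cfP θ n * cfQ θ (n + 1) = (-1) ^ n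
  | 0 => by simp only [cfP, cfQ]; ring
  | n + 1 => by
    rw [cfP, cfQ, pow_succ, ← cfP_succ_mul_cfQ_sub_cfP_mul_cfQ_succ θ n]; ring

lemma isCoprime_cfP_cfQ (θ : ℝ) (n : ℕ) : IsCoprime (cfP θ n) (cfQ θ n) := by
  have hdet := cfP_succ_mul_cfQ_sub_cfP_mul_cfQ_succ θ n
  refine ⟨-(-1) ^ n * cfQ θ (n + 1), (-1) ^ n * cfP θ (n + 1), ?_⟩
  linear_combination (-1 : ℤ) ^ n * hdet + (Even.neg_one_pow ⟨n, rfl⟩ : (-1 : ℤ) ^ (n + n) = 1)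

/-- The approximation error `|q_n θ - p_n|` (see `cfQ_mul_sub_cfP`), as a product of Gauss
iterates. -/
noncomputable def cfBeta (θ : ℝ) (n : ℕ) : ℝ := ∏ k ∈ Finset.range (n + 1), gaussIter θ k

lemma cfBeta_zero (θ : ℝ) : cfBeta θ 0 = gaussIter θ 0 := Finset.prod_range_one _

lemma cfBeta_succ (θ : ℝ) (n : ℕ) : cfBeta θ (n + 1) = cfBeta θ n * gaussIter θ (n + 1) :=
  Finset.prod_range_succ _ _

lemma cfBeta_pos (hθ : Irrational θ) (n : ℕ) : 0 < cfBeta θ n :=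
  Finset.prod_pos fun k _ ↦ gaussIter_pos hθ k

lemma cfBeta_succ_lt (hθ : Irrational θ) (n : ℕ) : cfBeta θ (n + 1) < cfBeta θ n := by
  rw [cfBeta_succ]
  exact mul_lt_of_lt_one_right (cfBeta_pos hθ n) (gaussIter_lt_one θ _)

lemma gaussIter_mul_gaussIter_succ (hθ : Irrational θ) (n : ℕ) :
    gaussIter θ n * gaussIter θ (n + 1) = 1 - cfA θ (n + 1) * gaussIter θ n := by
  rw [gaussIter_succ, mul_sub, mul_inv_cancel₀ (gaussIter_pos hθ n).ne']
  ring

lemma cfBeta_add_two (hθ : Irrational θ) (n : ℕ) :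
    cfBeta θ (n + 2) = cfBeta θ n - cfA θ (n + 2) * cfBeta θ (n + 1) := by
  rw [cfBeta_succ, cfBeta_succ, mul_assoc, gaussIter_mul_gaussIter_succ hθ]
  ring

lemma cfQ_mul_sub_cfP (hθ : Irrational θ) :
    ∀ n, cfQ θ n * θ - cfP θ n = (-1) ^ n * cfBeta θ n
  | 0 => by
    rw [cfBeta_zero]
    simp only [cfQ, cfP, cfA, gaussIter, Int.fract]
    push_cast; ring
  | 1 => by
    rw [cfBeta_succ, cfBeta_zero, gaussIter_mul_gaussIter_succ hθ]
    simp only [cfQ, cfP, gaussIter, Int.fract, cfA]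
    push_cast; ring
  | n + 2 => by
    have h₀ := cfQ_mul_sub_cfP hθ n
    have h₁ := cfQ_mul_sub_cfP hθ (n + 1)
    rw [cfBeta_add_two hθ, cfQ, cfP]
    push_cast
    linear_combination h₀ + (cfA θ (n + 2) : ℝ) * h₁

lemma cfQ_succ_mul_cfBeta_add_cfQ_mul_cfBeta_succ (hθ : Irrational θ) (n : ℕ) :
    cfQ θ (n + 1) * cfBeta θ n + cfQ θ n * cfBeta θ (n + 1) = 1 := by
  have hdet : (cfP θ (n + 1) * cfQ θ n - cfP θ n * cfQ θ (n + 1) : ℝ) = (-1) ^ n := by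
    exact_mod_cast cfP_succ_mul_cfQ_sub_cfP_mul_cfQ_succ θ n
  refine mul_left_cancel₀ (pow_ne_zero n (neg_ne_zero.2 one_ne_zero) : (-1 : ℝ) ^ n ≠ 0) ?_
  linear_combination cfQ θ n * cfQ_mul_sub_cfP hθ (n + 1) - cfQ θ (n + 1) * cfQ_mul_sub_cfP hθ n
    + hdet

lemma cfQ_succ_mul_cfBeta_lt_one (hθ : Irrational θ) (n : ℕ) :
    cfQ θ (n + 1) * cfBeta θ n < 1 := by
  have hq : (0 : ℝ) < cfQ θ n := by exact_mod_cast one_le_cfQ hθ n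
  linarith [cfQ_succ_mul_cfBeta_add_cfQ_mul_cfBeta_succ hθ n, mul_pos hq (cfBeta_pos hθ (n + 1))]

lemma one_lt_two_mul_cfQ_succ_mul_cfBeta (hθ : Irrational θ) (n : ℕ) :
    1 < 2 * cfQ θ (n + 1) * cfBeta θ n := by
  have hq : (0 : ℝ) < cfQ θ n := by exact_mod_cast one_le_cfQ hθ n
  have hqq : (cfQ θ n : ℝ) ≤ cfQ θ (n + 1) := by exact_mod_cast cfQ_le_cfQ_succ hθ n
  have : cfQ θ n * cfBeta θ (n + 1) < cfQ θ (n + 1) * cfBeta θ n :=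
    mul_lt_mul_of_le_of_lt_of_nonneg_of_pos hqq (cfBeta_succ_lt hθ n) (cfBeta_pos hθ _).le
      (hq.trans_le hqq)
  linarith [cfQ_succ_mul_cfBeta_add_cfQ_mul_cfBeta_succ hθ n]

lemma gaussIter_fract_inv (ξ : ℝ) : ∀ k, gaussIter (Int.fract ξ)⁻¹ k = gaussIter ξ (k + 1)
  | 0 => by simp only [gaussIter, one_div]
  | k + 1 => by simp only [gaussIter, gaussIter_fract_inv ξ k]

lemma cfA_fract_inv (ξ : ℝ) : ∀ k, cfA (Int.fract ξ)⁻¹ k = cfA ξ (k + 1)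
  | 0 => by simp only [cfA, gaussIter, one_div]
  | k + 1 => by simp only [cfA, gaussIter_fract_inv]

lemma cfP_fract_inv (ξ : ℝ) : ∀ n, cfP (Int.fract ξ)⁻¹ n = cfQ ξ (n + 1)
  | 0 => by simp only [cfP, cfQ, cfA_fract_inv]
  | 1 => by simp only [cfP, cfQ, cfA_fract_inv]
  | n + 2 => by simp only [cfP, cfQ, cfA_fract_inv, cfP_fract_inv ξ n, cfP_fract_inv ξ (n + 1)]

lemma cfP_succ (ξ : ℝ) : ∀ n, cfP ξ (n + 1) = ⌊ξ⌋ * cfQ ξ (n + 1) + cfQ (Int.fract ξ)⁻¹ n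
  | 0 => by simp only [cfP, cfQ, cfA]; ring
  | 1 => by simp only [cfP, cfQ, cfA_fract_inv]; simp only [cfA]; ring
  | n + 2 => by
    rw [cfP, cfP_succ ξ n, cfP_succ ξ (n + 1), cfQ.eq_3 ξ (n + 1), cfQ.eq_3 (Int.fract ξ)⁻¹ n,
      cfA_fract_inv]
    ring

lemma convergent_eq_cfP_div_cfQ (hθ : Irrational θ) (n : ℕ) :
    θ.convergent n = (cfP θ n / cfQ θ n : ℚ) := by
  induction n generalizing θ with
  | zero => simp [cfP, cfQ, cfA]
  | succ n ih =>
    have hθ' : Irrational (Int.fract θ)⁻¹ := (irrational_gaussIter hθ 0).inv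
    have hq : (cfQ θ (n + 1) : ℚ) ≠ 0 := by
      have := one_le_cfQ hθ (n + 1); positivity
    rw [Real.convergent_succ, ih hθ', cfP_fract_inv, cfP_succ]
    field_simp
    push_cast; ring

lemma den_convergent (hθ : Irrational θ) (n : ℕ) : ((θ.convergent n).den : ℤ) = cfQ θ n := by
  rw [convergent_eq_cfP_div_cfQ hθ n]
  exact Rat.den_div_eq_of_coprime (one_le_cfQ hθ n)
    (Int.isCoprime_iff_gcd_eq_one.mp (isCoprime_cfP_cfQ θ n))

lemma abs_sub_convergent (hθ : Irrational θ) (n : ℕ) :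
    |θ - θ.convergent n| = cfBeta θ n / cfQ θ n := by
  have hq : (0 : ℝ) < cfQ θ n := by exact_mod_cast one_le_cfQ hθ n
  have hβ : |(-1 : ℝ) ^ n * cfBeta θ n| = cfBeta θ n := by
    rw [abs_mul, abs_pow, abs_neg, abs_one, one_pow, one_mul, abs_of_pos (cfBeta_pos hθ n)]
  rw [convergent_eq_cfP_div_cfQ hθ n, Rat.cast_div, Rat.cast_intCast, Rat.cast_intCast,
    ← hβ, ← cfQ_mul_sub_cfP hθ, sub_div' hq.ne', mul_comm, abs_div, abs_of_pos hq]

lemma cfQ_succ_lt_of_cfBeta_le (hθ : Irrational θ) (hξ : Irrational ξ) {c : ℝ} {n j : ℕ}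
    (h : cfBeta ξ j ≤ c * cfBeta θ n) : (cfQ θ (n + 1) : ℝ) < 2 * c * cfQ ξ (j + 1) := by
  have hQ : (0 : ℝ) ≤ cfQ ξ (j + 1) := by exact_mod_cast zero_le_one.trans (one_le_cfQ hξ (j + 1))
  refine lt_of_mul_lt_mul_right ?_ (cfBeta_pos hθ n).le
  calc (cfQ θ (n + 1) : ℝ) * cfBeta θ n < 1 := cfQ_succ_mul_cfBeta_lt_one hθ n
    _ < 2 * cfQ ξ (j + 1) * cfBeta ξ j := one_lt_two_mul_cfQ_succ_mul_cfBeta hξ j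
    _ ≤ 2 * cfQ ξ (j + 1) * (c * cfBeta θ n) := by gcongr
    _ = 2 * c * cfQ ξ (j + 1) * cfBeta θ n := by ring

lemma exists_cfQ_of_two_mul_cfQ_lt (hθ : Irrational θ) {m : ℕ} (hm : 0 < m) {n : ℕ}
    (h : 2 * m * cfQ θ n < cfQ θ (n + 1)) :
    ∃ j, cfQ (m * θ) j ≤ cfQ θ n ∧ cfQ θ n ≤ m * cfQ (m * θ) j ∧
      cfQ θ (n + 1) ≤ 2 * m * cfQ (m * θ) (j + 1) := by
  have hξ : Irrational (m * θ) := hθ.natCast_mul hm.ne'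
  set x := θ.convergent n
  have hq : (0 : ℝ) < cfQ θ n := by exact_mod_cast one_le_cfQ hθ n
  have hmx_den : (((m : ℚ) * x).den : ℤ) ≤ cfQ θ n := by
    rw [← den_convergent hθ n]
    exact_mod_cast Nat.le_of_dvd x.den_pos (Rat.den_natCast_mul_dvd m x)
  have hmx : |m * θ - ((m * x : ℚ) : ℝ)| = m * cfBeta θ n / cfQ θ n := by
    rw [Rat.cast_mul, Rat.cast_natCast, ← mul_sub, abs_mul, abs_sub_convergent hθ, Nat.abs_cast,
      mul_div_assoc]
  obtain ⟨j, hj⟩ : ∃ j, (m * x : ℚ) = (m * θ).convergent j := by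
    refine Real.exists_rat_eq_convergent ?_
    have hlt : 2 * m * cfQ θ n * cfBeta θ n < 1 := by
      have : (2 * m * cfQ θ n : ℝ) < cfQ θ (n + 1) := by exact_mod_cast h
      nlinarith [cfQ_succ_mul_cfBeta_lt_one hθ n, cfBeta_pos hθ n]
    have hden : (((m : ℚ) * x).den : ℝ) ≤ cfQ θ n := by exact_mod_cast hmx_den
    rw [hmx, div_lt_div_iff₀ hq (by positivity)]
    calc (m : ℝ) * cfBeta θ n * (2 * (((m : ℚ) * x).den : ℝ) ^ 2)
        ≤ m * cfBeta θ n * (2 * (cfQ θ n : ℝ) ^ 2) := by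
          have := cfBeta_pos hθ n
          gcongr
      _ < 1 * (cfQ θ n : ℝ) := by nlinarith
  have hQ : (((m : ℚ) * x).den : ℤ) = cfQ (m * θ) j := by rw [hj, den_convergent hξ]
  refine ⟨j, hQ ▸ hmx_den, ?_, ?_⟩
  · rw [← hQ, ← den_convergent hθ n]
    exact_mod_cast Nat.le_of_dvd (by positivity) (Rat.den_dvd_mul_den_natCast_mul hm x)
  · suffices cfBeta (m * θ) j ≤ m * cfBeta θ n by
      exact_mod_cast (cfQ_succ_lt_of_cfBeta_le hθ hξ this).le
    have hβ : cfBeta (m * θ) j / cfQ (m * θ) j = m * cfBeta θ n / cfQ θ n := by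
      rw [← hmx, hj, abs_sub_convergent hξ]
    have hQq : (cfQ (m * θ) j : ℝ) ≤ cfQ θ n := by exact_mod_cast hQ ▸ hmx_den
    have hQ₀ : (cfQ (m * θ) j : ℝ) ≠ 0 := by
      have := one_le_cfQ hξ j; positivity
    calc cfBeta (m * θ) j = cfQ (m * θ) j * (m * cfBeta θ n / cfQ θ n) := by
          rw [← hβ, mul_div_cancel₀ _ hQ₀]
      _ ≤ cfQ θ n * (m * cfBeta θ n / cfQ θ n) := by
          have := cfBeta_pos hθ n
          gcongr
      _ = m * cfBeta θ n := mul_div_cancel₀ _ hq.ne'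

lemma brjunoB_le_brjunoB_mul_add_tsum (hθ : Irrational θ) {m : ℕ} (hm : 0 < m) :
    brjunoB θ ≤ brjunoB (m * θ) + ∑' n, (ENNReal.ofReal (Real.log (2 * m) / cfQ θ n) +
      ENNReal.ofReal (Real.log (cfQ θ n) / cfQ θ n)) := by
  set S := {n | 2 * m * cfQ θ n < cfQ θ (n + 1)}
  have hJ n : ∃ j, n ∈ S → cfQ (m * θ) j ≤ cfQ θ n ∧ cfQ θ n ≤ m * cfQ (m * θ) j ∧
      cfQ θ (n + 1) ≤ 2 * m * cfQ (m * θ) (j + 1) := by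
    by_cases hn : n ∈ S
    · exact (exists_cfQ_of_two_mul_cfQ_lt hθ hm hn).imp fun _ hj _ ↦ hj
    · exact ⟨0, fun h ↦ absurd h hn⟩
  choose J hJ using hJ
  have hξ : Irrational (m * θ) := hθ.natCast_mul hm.ne'
  have hq n : (0 : ℝ) < cfQ θ n := by exact_mod_cast one_le_cfQ hθ n
  have h2m : (0 : ℝ) < 2 * m := by positivity
  refine ENNReal.tsum_le_tsum_add_tsum_of_injOn (S := S) (J := J) ?_ (fun n hn ↦ ?_) (fun n hn ↦ ?_)
  · suffices ∀ a ∈ S, ∀ b ∈ S, a < b → J a ≠ J b from fun a ha b hb hab ↦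
      by_contra fun hne ↦ (lt_or_gt_of_ne hne).elim (this a ha b hb · hab) (this b hb a ha · hab.symm)
    intro a ha b hb hab hJab
    have hmono := cfQ_monotone hθ (by omega : a + 1 ≤ b)
    have hQa := (hJ a ha).1
    have hQb := (hJ b hb).2.1
    have hqa := one_le_cfQ hθ a
    have hm' : (0 : ℤ) < m := by exact_mod_cast hm
    rw [hJab] at hQa
    nlinarith [ha.out, mul_le_mul_of_nonneg_left hQa hm'.le]
  · obtain ⟨h₁, -, h₃⟩ := hJ n hn
    calc ENNReal.ofReal (Real.log (cfQ θ (n + 1)) / cfQ θ n)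
        ≤ ENNReal.ofReal (Real.log (cfQ (m * θ) (J n + 1)) / cfQ (m * θ) (J n) +
          Real.log (2 * m) / cfQ θ n) := by
          refine ENNReal.ofReal_le_ofReal (Real.log_div_le_log_div_add_log_div ?_ ?_ (hq _) ?_ h2m ?_)
          · exact_mod_cast one_le_cfQ hξ _
          · exact_mod_cast h₁
          · exact_mod_cast one_le_cfQ hξ _
          · exact_mod_cast h₃
      _ ≤ _ := ENNReal.ofReal_add_le.trans (by gcongr; exact le_self_add)
  · have hsmall : (cfQ θ (n + 1) : ℝ) ≤ 2 * m * cfQ θ n := by exact_mod_cast not_lt.1 hn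
    exact (ENNReal.ofReal_le_ofReal (Real.log_div_le_log_div_add_log_div (hq n) le_rfl (hq _)
      (by exact_mod_cast one_le_cfQ hθ n) h2m hsmall)).trans
      (ENNReal.ofReal_add_le.trans_eq (add_comm _ _))

lemma tsum_ofReal_log_two_mul_div_cfQ_add_le (hθ : Irrational θ) {m : ℕ} (hm : 0 < m) :
    ∑' n, (ENNReal.ofReal (Real.log (2 * m) / cfQ θ n) +
      ENNReal.ofReal (Real.log (cfQ θ n) / cfQ θ n)) ≤ ENNReal.ofReal (4 * Real.log (2 * m) + 16) := by
  have hq n : (1 : ℝ) ≤ cfQ θ n := by exact_mod_cast one_le_cfQ hθ n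
  have hq2 n : 2 * (cfQ θ n : ℝ) ≤ cfQ θ (n + 2) := by
    exact_mod_cast two_mul_cfQ_le_cfQ_add_two hθ n
  have hlog : 0 ≤ Real.log (2 * m) := Real.log_nonneg (by norm_cast; omega)
  calc _ = ENNReal.ofReal (Real.log (2 * m)) * (∑' n, ENNReal.ofReal (cfQ θ n : ℝ)⁻¹)
        + ∑' n, ENNReal.ofReal (Real.log (cfQ θ n) / cfQ θ n) := by
        simp only [div_eq_mul_inv (Real.log (2 * m)), ENNReal.ofReal_mul hlog]
        rw [ENNReal.tsum_add, ENNReal.tsum_mul_left]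
    _ ≤ ENNReal.ofReal (Real.log (2 * m)) * 4 + 16 := by
      gcongr
      · exact tsum_ofReal_inv_le_four hq hq2
      · exact tsum_ofReal_log_div_le_sixteen hq hq2
    _ = ENNReal.ofReal (4 * Real.log (2 * m) + 16) := by
      rw [ENNReal.ofReal_add (by positivity) (by norm_num), ENNReal.ofReal_mul zero_le_four,
        mul_comm]
      norm_num

end ContinuedFraction

/-- There is `C > 0` such that `B(θ) ≤ B(mθ) + C log m` for every positive integer `m`
and every irrational `θ` (inequality in `[0, ∞]`). -/
theorem brjunoB_mul_bound :
    ∃ C : ℝ, 0 < C ∧ ∀ m : ℕ, 0 < m → ∀ θ : ℝ, Irrational θ →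
      brjunoB θ ≤ brjunoB (m * θ) + ENNReal.ofReal (C * Real.log m) := by
  refine ⟨32, by norm_num, fun m hm θ hθ ↦ ?_⟩
  obtain rfl | hm2 : m = 1 ∨ 2 ≤ m := by omega
  · simp
  have hconst : 4 * Real.log (2 * m) + 16 ≤ 32 * Real.log m := by
    have := Real.log_two_gt_d9
    have := Real.log_le_log two_pos (by exact_mod_cast hm2 : (2 : ℝ) ≤ m)
    rw [Real.log_mul two_ne_zero (by positivity)]
    linarith
  calc brjunoB θ ≤ brjunoB (m * θ) + ∑' n, (ENNReal.ofReal (Real.log (2 * m) / cfQ θ n) +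
        ENNReal.ofReal (Real.log (cfQ θ n) / cfQ θ n)) := brjunoB_le_brjunoB_mul_add_tsum hθ hm
    _ ≤ brjunoB (m * θ) + ENNReal.ofReal (4 * Real.log (2 * m) + 16) := by
      gcongr; exact tsum_ofReal_log_two_mul_div_cfQ_add_le hθ hm
    _ ≤ brjunoB (m * θ) + ENNReal.ofReal (32 * Real.log m) := by gcongr
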